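/- The Study determinant is multiplicative: for all quaternionic n×n matrices M and N, Sdet(MN) = Sdet(M)·Sdet(N). -/

import Mathlib

open scoped Quaternion

/-- The simplex part of a quaternion `x = a + j·b`: the complex number `a = x₀ + x₁·i`. -/
noncomputable def qSimplex (x : ℍ[ℝ]) : ℂ := ⟨x.re, x.imI⟩

/-- The perplex part of a quaternion `x = a + j·b`: the complex number `b = x₂ − x₃·i`. -/
noncomputable def qPerplex (x : ℍ[ℝ]) : ℂ := ⟨x.imJ, -x.imK⟩

/-- The simplex part of a quaternionic matrix. -/
noncomputable def matSimplex {α β : Type*} (M : Matrix α β ℍ[ℝ]) : Matrix α β ℂ :=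
  Matrix.of fun r s => qSimplex (M r s)

/-- The perplex part of a quaternionic matrix. -/
noncomputable def matPerplex {α β : Type*} (M : Matrix α β ℍ[ℝ]) : Matrix α β ℂ :=
  Matrix.of fun r s => qPerplex (M r s)

/-- The complex-block representation `ψ(M) = [[Mˢ, −conj(Mᵖ)], [Mᵖ, conj(Mˢ)]]`
of a quaternionic matrix `M = Mˢ + j·Mᵖ`. -/
noncomputable def psi {α β : Type*} (M : Matrix α β ℍ[ℝ]) : Matrix (α ⊕ α) (β ⊕ β) ℂ :=
  Matrix.fromBlocks (matSimplex M) (-(matPerplex M).map (starRingEnd ℂ))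
    (matPerplex M) ((matSimplex M).map (starRingEnd ℂ))

/-- The Study determinant of a square quaternionic matrix: `Sdet(M) = det(ψ(M))`. -/
noncomputable def Sdet {α : Type*} [Fintype α] [DecidableEq α] (M : Matrix α α ℍ[ℝ]) : ℂ :=
  (psi M).det

/-! Writing `x = a + j·b` with `a, b ∈ ℂ` and using `j·z = conj z·j`, the product of two
quaternions has simplex part `a a' − conj b · b'` and perplex part `conj a · b' + b a'`.
These are exactly the block entries of `ψ(M) ψ(N)`, so `ψ` is multiplicative and the Study
determinant inherits multiplicativity from `det`. -/

open Matrix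

noncomputable def qSimplexHom : ℍ[ℝ] →+ ℂ :=
  AddMonoidHom.mk' qSimplex fun x y => by simp [qSimplex, Complex.ext_iff]

noncomputable def qPerplexHom : ℍ[ℝ] →+ ℂ :=
  AddMonoidHom.mk' qPerplex fun x y => by simp [qPerplex, Complex.ext_iff]; ring

lemma qSimplex_mul (x y : ℍ[ℝ]) :
    qSimplex (x * y) = qSimplex x * qSimplex y - starRingEnd ℂ (qPerplex x) * qPerplex y := by
  simp only [qSimplex, qPerplex, Complex.ext_iff, Quaternion.re_mul, Quaternion.imI_mul,
    Complex.sub_re, Complex.sub_im, Complex.mul_re, Complex.mul_im, Complex.conj_re,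
    Complex.conj_im]
  constructor <;> ring

lemma qPerplex_mul (x y : ℍ[ℝ]) :
    qPerplex (x * y) = starRingEnd ℂ (qSimplex x) * qPerplex y + qPerplex x * qSimplex y := by
  simp only [qSimplex, qPerplex, Complex.ext_iff, Quaternion.imJ_mul, Quaternion.imK_mul,
    Complex.add_re, Complex.add_im, Complex.mul_re, Complex.mul_im, Complex.conj_re,
    Complex.conj_im]
  constructor <;> ring

section

variable {α β γ : Type*} [Fintype β]

lemma matSimplex_mul (M : Matrix α β ℍ[ℝ]) (N : Matrix β γ ℍ[ℝ]) :
    matSimplex (M * N) =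
      matSimplex M * matSimplex N - (matPerplex M).map (starRingEnd ℂ) * matPerplex N := by
  ext i k
  simp only [matSimplex, matPerplex, Matrix.sub_apply, mul_apply, map_apply, of_apply,
    ← Finset.sum_sub_distrib, ← qSimplex_mul]
  exact map_sum qSimplexHom _ _

lemma matPerplex_mul (M : Matrix α β ℍ[ℝ]) (N : Matrix β γ ℍ[ℝ]) :
    matPerplex (M * N) =
      (matSimplex M).map (starRingEnd ℂ) * matPerplex N + matPerplex M * matSimplex N := by
  ext i k
  simp only [matSimplex, matPerplex, Matrix.add_apply, mul_apply, map_apply, of_apply,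
    ← Finset.sum_add_distrib, ← qPerplex_mul]
  exact map_sum qPerplexHom _ _

lemma psi_mul (M : Matrix α β ℍ[ℝ]) (N : Matrix β γ ℍ[ℝ]) :
    psi (M * N) = psi M * psi N := by
  rw [psi, psi, psi, fromBlocks_multiply, matSimplex_mul, matPerplex_mul]
  congr 1
  · rw [Matrix.neg_mul, sub_eq_add_neg]
  · simp only [Matrix.map_add _ (map_add _), Matrix.map_mul, Matrix.map_map, Function.comp_def,
      Complex.conj_conj, Matrix.map_id', Matrix.mul_neg, Matrix.neg_mul, neg_add]
  · exact add_comm _ _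
  · simp only [Matrix.map_sub _ (map_sub _), Matrix.map_mul, Matrix.map_map, Function.comp_def,
      Complex.conj_conj, Matrix.map_id', Matrix.mul_neg]
    abel

end

theorem sdet_mul {n : ℕ} (M N : Matrix (Fin n) (Fin n) ℍ[ℝ]) :
    Sdet (M * N) = Sdet M * Sdet N := by
  rw [Sdet, Sdet, Sdet, psi_mul, det_mul]
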